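/- arXiv:1202.0175 — 4 statements merged into one kernel-verified Lean document; each statement's English description precedes it below -/
import Mathlib

section
/- The scaling property P_t(αK | αS) = α·P_t(K | S) for all α > 0, K > 0, S > 0 holds if and only if the return S_{t+1}/S_t is independent of S_t, i.e., the conditional law of S_{t+1}/S_t given S_t = s does not depend on s. -/
open MeasureTheory Filter Set Topology

/-!
Write `R_s k := ∫ (k - z)⁺ d(κ s).map (· / s)` for the put price of the return law. Then
`P K s = s · R_s (K / s)`, so the scaling property says exactly that `R_s` does not depend on `s`.
A finite measure carried by `(0, ∞)` is determined by its put prices at positive strikes, because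
their right derivative in the strike is its distribution function.
-/

lemma abs_slope_posPart_sub_le_one (y a K : ℝ) :
    |slope (fun K => max (K - y) 0) a K| ≤ 1 := by
  rw [slope_def_field]
  rcases eq_or_ne K a with rfl | hK
  · simp
  rw [abs_div, div_le_one (abs_pos.2 (sub_ne_zero.2 hK))]
  simpa using abs_max_sub_max_le_abs (K - y) (a - y) 0

lemma tendsto_slope_posPart_sub (y a : ℝ) :
    Tendsto (slope (fun K => max (K - y) 0) a) (𝓝[>] a) (𝓝 ((Iic a).indicator 1 y)) := by
  rcases le_or_gt y a with hy | hy
  · rw [indicator_of_mem (mem_Iic.2 hy), Pi.one_apply]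
    refine tendsto_const_nhds.congr' (eventually_nhdsWithin_of_forall fun K (hK : a < K) => ?_)
    rw [slope_def_field, max_eq_left (by linarith), max_eq_left (by linarith),
      sub_sub_sub_cancel_right, div_self (sub_ne_zero.2 hK.ne')]
  · rw [indicator_of_notMem (notMem_Iic.2 hy)]
    refine tendsto_const_nhds.congr' ?_
    filter_upwards [Ioo_mem_nhdsGT hy] with K hK
    rw [slope_def_field, max_eq_right (by linarith [hK.2]), max_eq_right (by linarith)]
    simp

lemma hasDerivWithinAt_integral_posPart_sub {μ : Measure ℝ} [IsFiniteMeasure μ]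
    (hμ : ∀ K, Integrable (fun y => max (K - y) 0) μ) (a : ℝ) :
    HasDerivWithinAt (fun K => ∫ y, max (K - y) 0 ∂μ) (μ.real (Iic a)) (Ici a) a := by
  rw [← hasDerivWithinAt_Ioi_iff_Ici, hasDerivWithinAt_iff_tendsto_slope' self_notMem_Ioi]
  have hslope : slope (fun K => ∫ y, max (K - y) 0 ∂μ) a =
      fun K => ∫ y, slope (fun K => max (K - y) 0) a K ∂μ := by
    ext K
    simp only [slope, vsub_eq_sub, smul_eq_mul]
    rw [integral_const_mul, integral_sub (hμ K) (hμ a)]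
  rw [hslope, ← integral_indicator_one measurableSet_Iic]
  refine tendsto_integral_filter_of_dominated_convergence (fun _ => 1)
    (Eventually.of_forall fun K => ?_) (Eventually.of_forall fun K => ?_) (integrable_const 1)
    (Eventually.of_forall fun y => tendsto_slope_posPart_sub y a)
  · simp only [slope_def_field]
    exact (Continuous.aestronglyMeasurable (by fun_prop))
  · exact Eventually.of_forall fun y => abs_slope_posPart_sub_le_one y a K

lemma integrable_posPart_sub_of_measure_Iic_zero {μ : Measure ℝ} [IsFiniteMeasure μ]
    (hμ : μ (Iic 0) = 0) (K : ℝ) : Integrable (fun y => max (K - y) 0) μ := by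
  refine Integrable.of_bound (Continuous.aestronglyMeasurable (by fun_prop)) |K| ?_
  filter_upwards [measure_eq_zero_iff_ae_notMem.1 hμ] with y hy
  rw [notMem_Iic] at hy
  rw [Real.norm_eq_abs, abs_of_nonneg (le_max_right _ _)]
  exact max_le (by linarith [le_abs_self K]) (abs_nonneg K)

lemma measure_eq_of_integral_posPart_sub_eq {μ ν : Measure ℝ} [IsFiniteMeasure μ]
    [IsFiniteMeasure ν] (hμ : μ (Iic 0) = 0) (hν : ν (Iic 0) = 0)
    (h : ∀ K, 0 < K → ∫ y, max (K - y) 0 ∂μ = ∫ y, max (K - y) 0 ∂ν) : μ = ν := by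
  refine Measure.ext_of_Iic μ ν fun a => ?_
  rcases le_or_gt a 0 with ha | ha
  · rw [measure_mono_null (Iic_subset_Iic.2 ha) hμ, measure_mono_null (Iic_subset_Iic.2 ha) hν]
  have hμ' :=
    hasDerivWithinAt_integral_posPart_sub (integrable_posPart_sub_of_measure_Iic_zero hμ) a
  have hν' :=
    hasDerivWithinAt_integral_posPart_sub (integrable_posPart_sub_of_measure_Iic_zero hν) a
  have heq : (fun K => ∫ y, max (K - y) 0 ∂μ) =ᶠ[𝓝[Ici a] a] fun K => ∫ y, max (K - y) 0 ∂ν :=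
    eventually_nhdsWithin_of_eventually_nhds ((eventually_gt_nhds ha).mono h)
  rw [← measureReal_eq_measureReal_iff]
  exact (uniqueDiffWithinAt_Ici a).eq_deriv _ hμ' (hν'.congr_of_eventuallyEq heq (h a ha))

lemma integral_posPart_sub_eq_mul_integral_map_div (μ : Measure ℝ) {s : ℝ} (hs : 0 < s) (K : ℝ) :
    ∫ y, max (K - y) 0 ∂μ = s * ∫ z, max (K / s - z) 0 ∂(μ.map (· / s)) := by
  rw [integral_map (by fun_prop) (Continuous.aestronglyMeasurable (by fun_prop)),
    ← integral_const_mul]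
  congr 1 with y
  rw [mul_max_of_nonneg _ _ hs.le, mul_zero, mul_sub, mul_div_cancel₀ _ hs.ne',
    mul_div_cancel₀ _ hs.ne']

lemma map_div_apply_Iic_zero (μ : Measure ℝ) {s : ℝ} (hs : 0 < s) :
    μ.map (· / s) (Iic 0) = μ (Iic 0) := by
  rw [Measure.map_apply (by fun_prop) measurableSet_Iic]
  congr 1 with y
  simp [div_le_iff₀ hs]

theorem scaling_iff_independent_returns_general
    (κ : ℝ → Measure ℝ) (hκprob : ∀ s > 0, IsProbabilityMeasure (κ s))
    (hκpos : ∀ s > 0, (κ s) (Set.Iic 0) = 0)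
    (P : ℝ → ℝ → ℝ)
    (hP : ∀ K s, 0 < s → P K s = ∫ y, max (K - y) 0 ∂(κ s)) :
    (∀ α K s, 0 < α → 0 < K → 0 < s → P (α * K) (α * s) = α * P K s) ↔
      (∀ s s', 0 < s → 0 < s' →
        Measure.map (fun y => y / s) (κ s) = Measure.map (fun y => y / s') (κ s')) := by
  have hreturn : ∀ K s, 0 < s →
      P K s = s * ∫ z, max (K / s - z) 0 ∂(Measure.map (fun y => y / s) (κ s)) := fun K s hs =>
    (hP K s hs).trans (integral_posPart_sub_eq_mul_integral_map_div _ hs K)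
  constructor
  · intro hscale s s' hs hs'
    have := hκprob s hs
    have := hκprob s' hs'
    refine measure_eq_of_integral_posPart_sub_eq
      ((map_div_apply_Iic_zero _ hs).trans (hκpos s hs))
      ((map_div_apply_Iic_zero _ hs').trans (hκpos s' hs')) fun k hk => ?_
    have h := hscale (s' / s) (k * s) s (by positivity) (by positivity) hs
    rw [show s' / s * (k * s) = k * s' by field_simp, div_mul_cancel₀ _ hs.ne',
      hreturn _ _ hs', hreturn _ _ hs, mul_div_cancel_right₀ _ hs.ne',
      mul_div_cancel_right₀ _ hs'.ne', ← mul_assoc, div_mul_cancel₀ _ hs.ne'] at h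
    exact (mul_left_cancel₀ hs'.ne' h).symm
  · intro hmap α K s hα _ hs
    rw [hreturn _ _ (mul_pos hα hs), hreturn _ _ hs, hmap (α * s) s (mul_pos hα hs) hs,
      mul_div_mul_left _ _ hα.ne', mul_assoc]

/-- The put-price scaling property `P (α K | α s) = α · P (K | s)`
(for all `α, K, s > 0`) holds if and only if the return `S_{t+1} / S_t` is
independent of `S_t`, i.e. the conditional law of `S_{t+1} / S_t` given
`S_t = s` does not depend on `s`.  Here `κ s` denotes the regular conditional
distribution of `S_{t+1}` given `S_t = s` and
`P K s = ∫ y, (K - y)⁺ ∂(κ s)`. -/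
theorem scaling_iff_independent_returns
    (κ : ℝ → Measure ℝ) (hκprob : ∀ s > 0, IsProbabilityMeasure (κ s))
    (hκpos : ∀ s > 0, (κ s) (Set.Iic 0) = 0)
    (hκmeas : ∀ s > 0, Measurable fun y : ℝ => y / s)
    (hint : ∀ s > 0, Integrable (fun y => y) (κ s))
    (P : ℝ → ℝ → ℝ)
    (hP : ∀ K s, 0 < s → P K s = ∫ y, max (K - y) 0 ∂(κ s)) :
    (∀ α K s, 0 < α → 0 < K → 0 < s → P (α * K) (α * s) = α * P K s) ↔
      (∀ s s', 0 < s → 0 < s' →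
        Measure.map (fun y => y / s) (κ s) = Measure.map (fun y => y / s') (κ s')) :=
  scaling_iff_independent_returns_general κ hκprob hκpos P hP
end

section
/- If S satisfies the scaling property (independent returns), the log-return density of the reverse Γ-adjoint process S̃ satisfies Q̃(ln(S̃_{t'}/S̃_t) ∈ ξ + dξ) = e^{−ξ} · Q(ln(S_{N−t'}·S_{N−t}^{-1})^{-1} ∈ ξ + dξ); i.e., the density f̃ of ln(S̃_{t'}/S̃_t) equals f̃(ξ) = e^{−ξ} f(−ξ), where f is the density of ln(S_{N−t}/S_{N−t'})... equivalently of the reversed-time log return negated. -/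
/-!
Writing the put price as `P K s = K G(log (K/s)) - s F(log (K/s))`, with `G` and `F` the
distribution functions of the densities `f` and `exp · f`, the two `G`-terms cancel in
`∂ₛ P = -F(log (K/s))`, and one more derivative gives the Breeden–Litzenberger formula
`∂ₛ² P = K f(log (K/s)) / s²`. At `K = 1`, `s = e^ξ` this is `e^{-2ξ} f(-ξ)`.
-/

open MeasureTheory Real Set Filter Topology

lemma hasDerivAt_integral_Iic {h : ℝ → ℝ} (hc : Continuous h) (hi : Integrable h) (x : ℝ) :
    HasDerivAt (fun y => ∫ t in Iic y, h t) (h x) x := by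
  have hsplit : (fun y => ∫ t in Iic y, h t)
      = fun y => (∫ t in Iic (0 : ℝ), h t) + ∫ t in (0 : ℝ)..y, h t := by
    funext y
    rw [← intervalIntegral.integral_Iic_sub_Iic hi.integrableOn hi.integrableOn]
    ring
  rw [hsplit]
  exact (intervalIntegral.integral_hasDerivAt_right hi.intervalIntegrable
    (hc.stronglyMeasurableAtFilter _ _) hc.continuousAt).const_add _

lemma hasDerivAt_log_const_div {K s : ℝ} (hK : K ≠ 0) (hs : s ≠ 0) :
    HasDerivAt (fun x => log (K / x)) (-s⁻¹) s := by
  refine (((hasDerivAt_inv hs).const_mul K).log (div_ne_zero hK hs)).congr_deriv ?_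
  field_simp

section PutPrice

variable {f : ℝ → ℝ} {K s : ℝ}

lemma max_sub_mul_exp_eq_indicator (hK : 0 < K) (hs : 0 < s) (η : ℝ) :
    max (K - s * exp η) 0 * f η
      = (Iic (log (K / s))).indicator (fun η => (K - s * exp η) * f η) η := by
  have hle : s * exp η ≤ K ↔ η ≤ log (K / s) := by
    rw [le_log_iff_exp_le (div_pos hK hs), le_div_iff₀ hs, mul_comm]
  by_cases hη : η ≤ log (K / s)
  · rw [indicator_of_mem (mem_Iic.2 hη), max_eq_left]
    linarith [hle.2 hη]
  · rw [indicator_of_notMem (by simpa using hη), max_eq_right, zero_mul]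
    linarith [lt_of_not_ge (mt hle.1 hη)]

lemma integral_max_sub_mul_exp_mul (hfi : Integrable f)
    (hgi : Integrable fun η => exp η * f η) (hK : 0 < K) (hs : 0 < s) :
    ∫ η, max (K - s * exp η) 0 * f η
      = K * (∫ η in Iic (log (K / s)), f η)
        - s * ∫ η in Iic (log (K / s)), exp η * f η := by
  simp_rw [max_sub_mul_exp_eq_indicator hK hs, sub_mul, mul_assoc]
  rw [integral_indicator measurableSet_Iic,
    integral_sub (hfi.integrableOn.const_mul K) (hgi.integrableOn.const_mul s),
    integral_const_mul, integral_const_mul]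

lemma hasDerivAt_put_price (hf : Continuous f) (hfi : Integrable f)
    (hgi : Integrable fun η => exp η * f η) (hK : 0 < K) (hs : 0 < s) :
    HasDerivAt (fun x => K * (∫ η in Iic (log (K / x)), f η)
        - x * ∫ η in Iic (log (K / x)), exp η * f η)
      (-∫ η in Iic (log (K / s)), exp η * f η) s := by
  have hlog := hasDerivAt_log_const_div hK.ne' hs.ne'
  have hG := ((hasDerivAt_integral_Iic hf hfi _).comp s hlog).const_mul K
  have hF := (hasDerivAt_id s).mul
    ((hasDerivAt_integral_Iic (continuous_exp.mul hf) hgi _).comp s hlog)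
  refine (hG.sub hF).congr_deriv ?_
  simp only [Function.comp_apply, Pi.mul_apply, id, exp_log (div_pos hK hs)]
  field_simp
  ring

lemma hasDerivAt_neg_integral_Iic_exp_mul (hf : Continuous f)
    (hgi : Integrable fun η => exp η * f η) (hK : 0 < K) (hs : 0 < s) :
    HasDerivAt (fun x => -∫ η in Iic (log (K / x)), exp η * f η)
      (K * f (log (K / s)) / s ^ 2) s := by
  have hlog := hasDerivAt_log_const_div hK.ne' hs.ne'
  refine ((hasDerivAt_integral_Iic (continuous_exp.mul hf) hgi _).comp s hlog).neg.congr_deriv ?_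
  simp only [Pi.mul_apply, exp_log (div_pos hK hs)]
  field_simp

theorem iteratedDeriv_two_put_price (hf : Continuous f) (hfi : Integrable f)
    (hgi : Integrable fun η => exp η * f η) (hK : 0 < K) (hs : 0 < s) :
    iteratedDeriv 2 (fun x => ∫ η, max (K - x * exp η) 0 * f η) s
      = K * f (log (K / s)) / s ^ 2 := by
  have hpos : ∀ᶠ x in 𝓝 s, 0 < x := eventually_gt_nhds hs
  have hderiv : deriv (fun x => ∫ η, max (K - x * exp η) 0 * f η)
      =ᶠ[𝓝 s] fun x => -∫ η in Iic (log (K / x)), exp η * f η := by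
    filter_upwards [hpos.eventually_nhds] with x hx
    have hput : (fun y => ∫ η, max (K - y * exp η) 0 * f η) =ᶠ[𝓝 x] fun y =>
        K * (∫ η in Iic (log (K / y)), f η) - y * ∫ η in Iic (log (K / y)), exp η * f η :=
      hx.mono fun y hy => integral_max_sub_mul_exp_mul hfi hgi hK hy
    rw [hput.deriv_eq, (hasDerivAt_put_price hf hfi hgi hK hx.self_of_nhds).deriv]
  rw [iteratedDeriv_succ, iteratedDeriv_one, hderiv.deriv_eq,
    (hasDerivAt_neg_integral_Iic_exp_mul hf hgi hK hs).deriv]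

end PutPrice

theorem reverse_gamma_adjoint_log_return_density_general
    (f : ℝ → ℝ)                       -- density of `ln (S_{N-t} / S_{N-t'})`
    (hf : Continuous f)
    (hfint : ∫ η, f η = 1)
    (hfmart : ∫ η, Real.exp η * f η = 1)   -- zero rates: `E[S_{N-t}/S_{N-t'}] = 1`
    (P : ℝ → ℝ → ℝ)
    (hP : ∀ K s, 0 < K → 0 < s →
      P K s = ∫ η, max (K - s * Real.exp η) 0 * f η)
    (Γ : ℝ → ℝ → ℝ)
    (hΓ : ∀ K s, Γ K s = iteratedDeriv 2 (fun x => P K x) s) :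
    ∀ ξ : ℝ,
      Real.exp ξ * Γ 1 (Real.exp ξ) = Real.exp (-ξ) * f (-ξ) := by
  intro ξ
  have hfi : Integrable f := .of_integral_ne_zero (by simp [hfint])
  have hgi : Integrable fun η => exp η * f η := .of_integral_ne_zero (by simp [hfmart])
  have hP1 : (fun x => P 1 x) =ᶠ[𝓝 (exp ξ)] fun x => ∫ η, max (1 - x * exp η) 0 * f η :=
    (eventually_gt_nhds (exp_pos ξ)).mono fun x hx => hP 1 x one_pos hx
  rw [hΓ, hP1.iteratedDeriv_eq, iteratedDeriv_two_put_price hf hfi hgi one_pos (exp_pos ξ),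
    one_div, log_inv, log_exp, exp_neg]
  field_simp

/-- Under the scaling property (independent returns), the
log-return density of the reverse Γ-adjoint process satisfies
`f̃(ξ) = e^{-ξ} · f(-ξ)`, where `f` is the density of the log-return
`ln (S_{N-t} / S_{N-t'})` of the original process over the reversed time
interval.  Here `P K s = ∫ (K - s e^η)⁺ f η dη` is the put price over that
period, `Γ K s = ∂_s² P K s` its gamma, and the adjoint transition density
from spot `1` is `k' ↦ Γ 1 k'`, so the adjoint log-return density is
`f̃(ξ) = e^ξ · Γ 1 (e^ξ)`. -/
theorem reverse_gamma_adjoint_log_return_density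
    (f : ℝ → ℝ)                       -- density of `ln (S_{N-t} / S_{N-t'})`
    (hf : Continuous f) (hfpos : ∀ η, 0 ≤ f η)
    (hfint : ∫ η, f η = 1)
    (hfmart : ∫ η, Real.exp η * f η = 1)   -- zero rates: `E[S_{N-t}/S_{N-t'}] = 1`
    (P : ℝ → ℝ → ℝ)
    (hP : ∀ K s, 0 < K → 0 < s →
      P K s = ∫ η, max (K - s * Real.exp η) 0 * f η)
    (Γ : ℝ → ℝ → ℝ)
    (hΓ : ∀ K s, Γ K s = iteratedDeriv 2 (fun x => P K x) s) :
    ∀ ξ : ℝ,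
      Real.exp ξ * Γ 1 (Real.exp ξ) = Real.exp (-ξ) * f (-ξ) :=
  reverse_gamma_adjoint_log_return_density_general f hf hfint hfmart P hP Γ hΓ
end

section
/- If the law of ln S_t is symmetric (Put-Call-Symmetry: C_t(K|S_t)/√K = P_t(K'|S_t)/√K' whenever K·K' = S_t²), and S satisfies the scaling property, then P_t(K|S_t) + S_t − K = P_t(S_t | K); differentiating twice in S_t yields Γ_t(k'|k) = ∂_K² P_t(k|k'), so the transition density of S satisfies Q(S_{t+1} ∈ dk' | S_t = k) = Γ_t(k | k') dk'. Consequently a process with Put-Call-Symmetry and independent stationary returns is its own reverse Γ-adjoint. -/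
/-!
Put-Call-Symmetry at the strike `K' = s² / K`, combined with the scaling property for the
factor `s / K`, turns the put `P(s²/K | s)` into `(s / K) · P(s | K)`; hence a call is the put
with strike and spot exchanged, `C(K | s) = P(s | K)`, and put-call parity gives
`P(K | s) + s - K = P(s | K)`. The two sides differ by a function affine in `s`, so their
second derivatives in `s` agree, which turns the spot gamma into the strike gamma; by
Breeden–Litzenberger the latter is the transition density.
-/

open MeasureTheory Filter Topology

theorem iteratedDeriv_two_eq_of_eventuallyEq_add_affine {f g : ℝ → ℝ} {x a b : ℝ}
    (hg : ∀ᶠ u in 𝓝 x, DifferentiableAt ℝ g u) (hfg : ∀ᶠ u in 𝓝 x, f u = g u + (a * u + b)) :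
    iteratedDeriv 2 f x = iteratedDeriv 2 g x := by
  have hderiv : deriv f =ᶠ[𝓝 x] fun u => deriv g u + a := by
    filter_upwards [hg, hfg.eventually_nhds] with u hgu hfgu
    rw [Filter.EventuallyEq.deriv_eq hfgu, deriv_fun_add hgu (by fun_prop)]
    simp
  simp only [iteratedDeriv_eq_iterate, Function.iterate_succ_apply, Function.iterate_zero_apply]
  rw [hderiv.deriv_eq, deriv_add_const]

section PutCallSymmetry

variable {P C : ℝ → ℝ → ℝ}

theorem call_eq_put_swap_of_putCallSymmetry
    (hscal : ∀ α K s, 0 < α → 0 < K → 0 < s → P (α * K) (α * s) = α * P K s)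
    (hPCS : ∀ K K' s, 0 < K → 0 < K' → 0 < s → K * K' = s ^ 2 →
      C K s / Real.sqrt K = P K' s / Real.sqrt K')
    {K s : ℝ} (hK : 0 < K) (hs : 0 < s) : C K s = P s K := by
  have hsqrtK : 0 < Real.sqrt K := Real.sqrt_pos.2 hK
  have hput : P (s ^ 2 / K) s = s / K * P s K := by
    convert hscal (s / K) s K (by positivity) hs hK using 2 <;> field_simp
  have hsqrt : Real.sqrt (s ^ 2 / K) = s / Real.sqrt K := by
    rw [Real.sqrt_div' _ hK.le, Real.sqrt_sq hs.le]
  have hsym := hPCS K (s ^ 2 / K) s hK (by positivity) hs (by field_simp)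
  rw [hput, hsqrt] at hsym
  calc C K s = Real.sqrt K * (C K s / Real.sqrt K) := by field_simp
    _ = P s K := by rw [hsym]; field_simp; rw [Real.sq_sqrt hK.le]

theorem put_add_sub_eq_put_swap
    (hparity : ∀ K s, 0 < K → 0 < s → C K s = P K s + s - K)
    (hscal : ∀ α K s, 0 < α → 0 < K → 0 < s → P (α * K) (α * s) = α * P K s)
    (hPCS : ∀ K K' s, 0 < K → 0 < K' → 0 < s → K * K' = s ^ 2 →
      C K s / Real.sqrt K = P K' s / Real.sqrt K')
    {K s : ℝ} (hK : 0 < K) (hs : 0 < s) : P K s + s - K = P s K := by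
  rw [← hparity K s hK hs, call_eq_put_swap_of_putCallSymmetry hscal hPCS hK hs]

end PutCallSymmetry

theorem put_call_symmetry_self_adjoint_general
    (q : ℝ → ℝ → ℝ)                      -- `q k` = transition density from spot `k`
    (P C : ℝ → ℝ → ℝ)
    (hparity : ∀ K s, 0 < K → 0 < s → C K s = P K s + s - K)
    (hscal : ∀ α K s, 0 < α → 0 < K → 0 < s → P (α * K) (α * s) = α * P K s)
    (hPCS : ∀ K K' s, 0 < K → 0 < K' → 0 < s → K * K' = s ^ 2 →
      C K s / Real.sqrt K = P K' s / Real.sqrt K')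
    (hsmooth' : ∀ s > 0, ContDiffOn ℝ 2 (fun K => P K s) (Set.Ioi 0))
    -- Breeden–Litzenberger: the transition density is the strike gamma
    (hBL : ∀ k > 0, ∀ k' > 0, q k k' = iteratedDeriv 2 (fun K => P K k) k') :
    (∀ K s, 0 < K → 0 < s → P K s + s - K = P s K) ∧
    (∀ k k', 0 < k → 0 < k' →
      iteratedDeriv 2 (fun s => P k' s) k = iteratedDeriv 2 (fun K => P K k') k) ∧
    (∀ k k', 0 < k → 0 < k' →
      q k k' = iteratedDeriv 2 (fun s => P k s) k') := by
  have hswap : ∀ K s, 0 < K → 0 < s → P K s + s - K = P s K := fun K s hK hs =>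
    put_add_sub_eq_put_swap hparity hscal hPCS hK hs
  have hgamma : ∀ k k', 0 < k → 0 < k' →
      iteratedDeriv 2 (fun s => P k' s) k = iteratedDeriv 2 (fun K => P K k') k := by
    intro k k' hk hk'
    refine iteratedDeriv_two_eq_of_eventuallyEq_add_affine (a := -1) (b := k')
      (((hsmooth' k' hk').differentiableOn two_ne_zero).eventually_differentiableAt
        (Ioi_mem_nhds hk)) ?_
    filter_upwards [Ioi_mem_nhds hk] with u hu
    linarith [hswap k' u hk' hu]
  exact ⟨hswap, hgamma, fun k k' hk hk' => (hBL k hk k' hk').trans (hgamma k' k hk' hk).symm⟩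

/-- Under Put-Call-Symmetry (`C(K|s)/√K = P(K'|s)/√K'` whenever
`K·K' = s²`), the scaling property, and put-call parity, one has
`P(K|s) + s - K = P(s|K)`; differentiating twice in the spot yields
`Γ(k'|k) = ∂_K² P(k|k')`, and consequently the transition density of `S`
satisfies `Q(S_{t+1} ∈ dk' | S_t = k) = Γ(k|k') dk'`: a process with
Put-Call-Symmetry and independent returns is its own reverse Γ-adjoint. -/
theorem put_call_symmetry_self_adjoint
    (κ : ℝ → Measure ℝ) (hκprob : ∀ s > 0, IsProbabilityMeasure (κ s))
    (hκpos : ∀ s > 0, (κ s) (Set.Iic 0) = 0)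
    (q : ℝ → ℝ → ℝ)                      -- `q k` = transition density from spot `k`
    (hκdens : ∀ k > 0, κ k
      = (volume.restrict (Set.Ioi (0:ℝ))).withDensity fun k' => ENNReal.ofReal (q k k'))
    (P C : ℝ → ℝ → ℝ)
    (hP : ∀ K s, 0 < s → P K s = ∫ y, max (K - y) 0 ∂(κ s))
    (hC : ∀ K s, 0 < s → C K s = ∫ y, max (y - K) 0 ∂(κ s))
    (hparity : ∀ K s, 0 < K → 0 < s → C K s = P K s + s - K)
    (hscal : ∀ α K s, 0 < α → 0 < K → 0 < s → P (α * K) (α * s) = α * P K s)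
    (hPCS : ∀ K K' s, 0 < K → 0 < K' → 0 < s → K * K' = s ^ 2 →
      C K s / Real.sqrt K = P K' s / Real.sqrt K')
    (hsmooth : ∀ K > 0, ContDiffOn ℝ 2 (fun s => P K s) (Set.Ioi 0))
    (hsmooth' : ∀ s > 0, ContDiffOn ℝ 2 (fun K => P K s) (Set.Ioi 0))
    -- Breeden–Litzenberger: the transition density is the strike gamma
    (hBL : ∀ k > 0, ∀ k' > 0, q k k' = iteratedDeriv 2 (fun K => P K k) k') :
    (∀ K s, 0 < K → 0 < s → P K s + s - K = P s K) ∧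
    (∀ k k', 0 < k → 0 < k' →
      iteratedDeriv 2 (fun s => P k' s) k = iteratedDeriv 2 (fun K => P K k') k) ∧
    (∀ k k', 0 < k → 0 < k' →
      q k k' = iteratedDeriv 2 (fun s => P k s) k') :=
  put_call_symmetry_self_adjoint_general q P C hparity hscal hPCS hsmooth' hBL
end

section
/- In the two-period case, the hedging cost function V_1(S_1) defined piecewise as V_1(S_1) = 2w − ζ_0 S_1 for 0 ≤ S_1 ≤ w/ζ_0 and V_1(S_1) = (ζ_0 − w/S_1)·P_1(w/(ζ_0 − w/S_1) | S_1) for S_1 > w/ζ_0 is continuous at S_1 = w/ζ_0, with both one-sided limits equal to w, and its derivative is continuous there with both one-sided limits equal to −ζ_0. -/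
/-!
To the left of `w/ζ₀` the cost `V₁` is the line `2w - ζ₀S₁`. To the right, put-call parity
`P₁(k|s) = k - s + C(k, s)`, with `C(k, s) = E[(S₂ - k)⁺ | S₁ = s]` the call price, rewrites it as
`2w - ζ₀S₁ + z C(w/z, S₁)` with `z = ζ₀ - w/S₁ ↓ 0`. So it suffices that this correction term and
its derivative tend to `0` as `S₁ ↓ w/ζ₀`.

Writing `k = w/z → ∞`, the derivative of the correction is `z' (C - k ∂ₖC) + z ∂ₛC`. Convexity of
`C` in the strike gives `0 ≤ C - k ∂ₖC ≤ 2 C(k/2, ·)`, and the bounded delta makes `C(k/2, S₁)`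
uniformly close to `C(k/2, w/ζ₀)`, which vanishes as `k → ∞`. Convexity in the strike is also
what makes the chain rule hold for `C`, which is only known to be differentiable in each variable
separately: secant slopes of a convex function are monotone, so pointwise convergence in the spot
controls them uniformly near the strike.
-/

open MeasureTheory Filter Topology Set Asymptotics

theorem isLittleO_of_convexOn_of_tendsto {ι : Type*} {l : Filter ι} {g : ι → ℝ → ℝ}
    {g₀ : ℝ → ℝ} {x : ι → ℝ} {x₀ a : ℝ}
    (hconv : ∀ᶠ i in l, ConvexOn ℝ univ (g i))
    (hlim : ∀ᶠ y in 𝓝 x₀, Tendsto (fun i => g i y) l (𝓝 (g₀ y)))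
    (hg₀ : HasDerivAt g₀ a x₀) (hx : Tendsto x l (𝓝 x₀)) :
    (fun i => g i (x i) - g i x₀ - a * (x i - x₀)) =o[l] fun i => x i - x₀ := by
  refine IsLittleO.of_bound fun ε hε => ?_
  have hslope : ∀ᶠ y in 𝓝[≠] x₀, slope g₀ x₀ y ∈ Ioo (a - ε) (a + ε) ∧
      Tendsto (fun i => slope (g i) x₀ y) l (𝓝 (slope g₀ x₀ y)) := by
    refine ((hasDerivAt_iff_tendsto_slope.1 hg₀).eventually
      (Ioo_mem_nhds (by linarith) (by linarith))).and ?_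
    filter_upwards [nhdsWithin_le_nhds hlim] with y hy
    simpa only [slope_def_module] using ((hy.sub hlim.self_of_nhds).const_smul (y - x₀)⁻¹)
  obtain ⟨u, ⟨hu, hgu⟩, hxu⟩ := ((hslope.filter_mono (nhdsGT_le_nhdsNE x₀)).and
    self_mem_nhdsWithin).exists
  obtain ⟨v, ⟨hv, hgv⟩, hxv⟩ := ((hslope.filter_mono (nhdsLT_le_nhdsNE x₀)).and
    self_mem_nhdsWithin).exists
  filter_upwards [hconv, hx (Ioo_mem_nhds hxv hxu), hgu (Ioo_mem_nhds hu.1 hu.2),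
    hgv (Ioo_mem_nhds hv.1 hv.2)] with i hi hxi hui hvi
  rcases eq_or_ne (x i) x₀ with hxi₀ | hxi₀
  · simp [hxi₀]
  have hmono := hi.slope_mono (mem_univ x₀)
  have hlow : slope (g i) x₀ v ≤ slope (g i) x₀ (x i) :=
    hmono ⟨mem_univ _, hxv.ne⟩ ⟨mem_univ _, hxi₀⟩ hxi.1.le
  have hhigh : slope (g i) x₀ (x i) ≤ slope (g i) x₀ u :=
    hmono ⟨mem_univ _, hxi₀⟩ ⟨mem_univ _, hxu.ne'⟩ hxi.2.le
  have hdiff : g i (x i) - g i x₀ - a * (x i - x₀) = (slope (g i) x₀ (x i) - a) * (x i - x₀) := by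
    rw [slope_def_field]; field_simp [sub_ne_zero.2 hxi₀]
  rw [hdiff, norm_mul]
  gcongr
  rw [Real.norm_eq_abs, abs_le]
  constructor <;> linarith [hui.2, hvi.1]

theorem hasDerivAt_comp_of_convexOn {f : ℝ → ℝ → ℝ} {φ : ℝ → ℝ} {t a b c : ℝ}
    (hconv : ∀ᶠ s in 𝓝 t, ConvexOn ℝ univ (f · s))
    (hcont : ∀ᶠ k in 𝓝 (φ t), ContinuousAt (f k) t)
    (ha : HasDerivAt (f · t) a (φ t)) (hb : HasDerivAt (f (φ t)) b t)
    (hφ : HasDerivAt φ c t) :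
    HasDerivAt (fun s => f (φ s) s) (a * c + b) t := by
  have hconvex := (isLittleO_of_convexOn_of_tendsto (g := fun s k => f k s) hconv hcont ha
    hφ.continuousAt).trans_isBigO hφ.isBigO_sub
  refine HasDerivAt.of_isLittleO (((hconvex.add (hφ.isLittleO.const_mul_left a)).add
    hb.isLittleO).congr_left fun s => ?_)
  simp only [smul_eq_mul]
  ring

theorem ConvexOn.sub_mul_le_two_mul_half_sub {C : ℝ → ℝ} {k D : ℝ} (hC : ConvexOn ℝ univ C)
    (hD : HasDerivAt C D k) (hk : 0 < k) : C k - k * D ≤ 2 * C (k / 2) - C k := by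
  have := hC.slope_le_of_hasDerivAt (mem_univ (k / 2)) (mem_univ k) (by linarith) hD
  rw [slope_def_field, div_le_iff₀ (by linarith)] at this
  linarith

theorem hasDerivAt_mul_comp_div {C : ℝ → ℝ → ℝ} {z : ℝ → ℝ} {w t z' a b : ℝ}
    (hz : HasDerivAt z z' t) (hzt : z t ≠ 0)
    (hconv : ∀ᶠ s in 𝓝 t, ConvexOn ℝ univ (C · s))
    (hcont : ∀ᶠ k in 𝓝 (w / z t), ContinuousAt (C k) t)
    (ha : HasDerivAt (C · t) a (w / z t)) (hb : HasDerivAt (C (w / z t)) b t) :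
    HasDerivAt (fun s => z s * C (w / z s) s)
      (z' * (C (w / z t) t - w / z t * a) + z t * b) t := by
  have hK : HasDerivAt (fun s => w / z s) (-(w * z') / z t ^ 2) t := by
    simpa using (hasDerivAt_const t w).fun_div hz hzt
  refine (hz.mul (hasDerivAt_comp_of_convexOn hconv hcont ha hb hK)).congr_deriv ?_
  field_simp
  ring

theorem one_sided_limits_of_eq_add {V f f' g : ℝ → ℝ} {x₀ : ℝ}
    (hf : ∀ x, HasDerivAt f (f' x) x) (hf' : ContinuousAt f' x₀)
    (hleft : ∀ x ≤ x₀, V x = f x) (hright : ∀ x > x₀, V x = f x + g x)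
    (hg : Tendsto g (𝓝[>] x₀) (𝓝 0)) (hgd : ∀ x > x₀, DifferentiableAt ℝ g x)
    (hg' : Tendsto (deriv g) (𝓝[>] x₀) (𝓝 0)) :
    Tendsto V (𝓝[<] x₀) (𝓝 (f x₀)) ∧ Tendsto V (𝓝[>] x₀) (𝓝 (f x₀)) ∧ ContinuousAt V x₀ ∧
      Tendsto (deriv V) (𝓝[<] x₀) (𝓝 (f' x₀)) ∧ Tendsto (deriv V) (𝓝[>] x₀) (𝓝 (f' x₀)) := by
  have hfc := (hf x₀).continuousAt.tendsto
  have hVle : Tendsto V (𝓝[≤] x₀) (𝓝 (f x₀)) :=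
    (hfc.mono_left nhdsWithin_le_nhds).congr'
      (eventually_nhdsWithin_of_forall fun x hx => (hleft x hx).symm)
  have hVgt : Tendsto V (𝓝[>] x₀) (𝓝 (f x₀)) := by
    have hsum := (hfc.mono_left nhdsWithin_le_nhds).add hg
    rw [add_zero] at hsum
    exact hsum.congr' (eventually_nhdsWithin_of_forall fun x hx => (hright x hx).symm)
  refine ⟨hVle.mono_left (nhdsWithin_mono _ Iio_subset_Iic_self), hVgt, ?_, ?_, ?_⟩
  · rw [ContinuousAt, hleft x₀ le_rfl, ← nhdsLE_sup_nhdsGT]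
    exact hVle.sup hVgt
  · refine (hf'.tendsto.mono_left nhdsWithin_le_nhds).congr' ?_
    filter_upwards [self_mem_nhdsWithin] with x hx
    refine ((hf x).congr_of_eventuallyEq ?_).deriv.symm
    filter_upwards [Iio_mem_nhds hx] with y hy using hleft y (le_of_lt hy)
  · have hsum := (hf'.tendsto.mono_left nhdsWithin_le_nhds).add hg'
    rw [add_zero] at hsum
    refine hsum.congr' ?_
    filter_upwards [self_mem_nhdsWithin] with x hx
    refine (((hf x).add (hgd x hx).hasDerivAt).congr_of_eventuallyEq ?_).deriv.symm
    filter_upwards [Ioi_mem_nhds hx] with y hy using hright y hy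

theorem hasDerivAt_const_sub_div (ζ₀ w : ℝ) {t : ℝ} (ht : t ≠ 0) :
    HasDerivAt (fun s => ζ₀ - w / s) (w / t ^ 2) t := by
  refine ((hasDerivAt_const t ζ₀).sub
    ((hasDerivAt_const t w).fun_div (hasDerivAt_id t) ht)).congr_deriv ?_
  simp [neg_div]

theorem sub_div_pos_of_div_lt {w ζ₀ t : ℝ} (hw : 0 < w) (hζ₀ : 0 < ζ₀) (ht : w / ζ₀ < t) :
    0 < ζ₀ - w / t := by
  have ht₀ : 0 < t := (div_pos hw hζ₀).trans ht
  rw [div_lt_iff₀ hζ₀] at ht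
  rw [sub_pos, div_lt_iff₀ ht₀]
  linarith

theorem tendsto_const_sub_div_nhdsGT {w ζ₀ : ℝ} (hw : 0 < w) (hζ₀ : 0 < ζ₀) :
    Tendsto (fun s => ζ₀ - w / s) (𝓝[>] (w / ζ₀)) (𝓝[>] 0) := by
  have hcont : ContinuousAt (fun s => ζ₀ - w / s) (w / ζ₀) :=
    (hasDerivAt_const_sub_div ζ₀ w (div_pos hw hζ₀).ne').continuousAt
  refine tendsto_nhdsWithin_iff.2 ⟨?_, eventually_nhdsWithin_of_forall fun t ht =>
    sub_div_pos_of_div_lt hw hζ₀ ht⟩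
  have hzero : ζ₀ - w / (w / ζ₀) = 0 := by field_simp; ring
  simpa [hzero] using hcont.tendsto.mono_left nhdsWithin_le_nhds

theorem tendsto_div_const_sub_div_nhdsGT {w ζ₀ : ℝ} (hw : 0 < w) (hζ₀ : 0 < ζ₀) :
    Tendsto (fun s => w / (ζ₀ - w / s)) (𝓝[>] (w / ζ₀)) atTop := by
  simpa [div_eq_mul_inv] using
    (tendsto_const_sub_div_nhdsGT hw hζ₀).inv_tendsto_nhdsGT_zero.const_mul_atTop hw

noncomputable def callPrice (μ : Measure ℝ) (k : ℝ) : ℝ := ∫ y, max (y - k) 0 ∂μ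

section CallPrice

variable {μ : Measure ℝ}

theorem callPrice_nonneg (k : ℝ) : 0 ≤ callPrice μ k :=
  integral_nonneg fun _ => le_max_right _ _

theorem integrable_max_sub_const [IsFiniteMeasure μ] (h : Integrable (fun y => y) μ) (k : ℝ) :
    Integrable (fun y => max (y - k) 0) μ :=
  (h.sub (integrable_const k)).pos_part

theorem antitone_callPrice [IsFiniteMeasure μ] (h : Integrable (fun y => y) μ) :
    Antitone (callPrice μ) :=
  fun _ _ hk => integral_mono (integrable_max_sub_const h _) (integrable_max_sub_const h _)
    fun _ => max_le_max (by linarith) le_rfl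

theorem convexOn_callPrice [IsFiniteMeasure μ] (h : Integrable (fun y => y) μ) :
    ConvexOn ℝ univ (callPrice μ) := by
  refine ⟨convex_univ, fun a _ b _ p q hp hq hpq => ?_⟩
  have hpayoff : ∀ y : ℝ, ConvexOn ℝ univ fun k => max (y - k) 0 := fun y =>
    ((convexOn_const y convex_univ).sub (concaveOn_id convex_univ)).sup
      (convexOn_const 0 convex_univ)
  have ha := (integrable_max_sub_const h a).const_mul p
  have hb := (integrable_max_sub_const h b).const_mul q
  calc callPrice μ (p • a + q • b)
      ≤ ∫ y, (p * max (y - a) 0 + q * max (y - b) 0) ∂μ :=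
        integral_mono (integrable_max_sub_const h _) (ha.add hb)
          fun y => (hpayoff y).2 (mem_univ a) (mem_univ b) hp hq hpq
    _ = p • callPrice μ a + q • callPrice μ b := by
        rw [integral_add ha hb, integral_const_mul, integral_const_mul]
        rfl

theorem tendsto_callPrice_atTop [IsFiniteMeasure μ] (h : Integrable (fun y => y) μ) :
    Tendsto (callPrice μ) atTop (𝓝 0) := by
  have hlim : ∀ y : ℝ, Tendsto (fun k => max (y - k) 0) atTop (𝓝 0) := fun y =>
    tendsto_const_nhds.congr' <| (eventually_ge_atTop y).mono fun k hk =>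
      (max_eq_right (by linarith)).symm
  show Tendsto (fun k => ∫ y, max (y - k) 0 ∂μ) atTop (𝓝 0)
  simpa using tendsto_integral_filter_of_dominated_convergence (fun y => |y|)
    (Eventually.of_forall fun k => (integrable_max_sub_const h k).aestronglyMeasurable)
    ((eventually_ge_atTop 0).mono fun k hk => Eventually.of_forall fun y => by
      rw [Real.norm_eq_abs, abs_of_nonneg (le_max_right _ _)]
      exact max_le (by linarith [le_abs_self y]) (abs_nonneg y))
    h.abs (Eventually.of_forall hlim)

theorem integral_put_eq [IsProbabilityMeasure μ] (h : Integrable (fun y => y) μ) (k : ℝ) :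
    ∫ y, max (k - y) 0 ∂μ = k - ∫ y, y ∂μ + callPrice μ k := by
  have hparity : ∀ y : ℝ, max (k - y) 0 = (k - y) + max (y - k) 0 := fun y => by
    have := max_zero_sub_max_neg_zero_eq_self (k - y)
    rw [neg_sub] at this
    linarith
  simp_rw [hparity]
  have hlin : Integrable (fun y => k - y) μ := (integrable_const k).sub h
  rw [integral_add hlin (integrable_max_sub_const h k), integral_sub (integrable_const k) h,
    integral_const]
  simp [callPrice]

end CallPrice

/-- `C k s` is the call price at strike `k` and spot `s`; `L` bounds the spot delta. -/
structure IsCallPriceSurface (C : ℝ → ℝ → ℝ) (L : ℝ) : Prop where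
  convexOn : ∀ s > 0, ConvexOn ℝ univ (C · s)
  antitone : ∀ s > 0, Antitone (C · s)
  nonneg : ∀ k, ∀ s > 0, 0 ≤ C k s
  tendsto_atTop : ∀ s > 0, Tendsto (C · s) atTop (𝓝 0)
  differentiableAt_strike : ∀ k > 0, ∀ s > 0, DifferentiableAt ℝ (C · s) k
  differentiableAt_spot : ∀ k > 0, ∀ s > 0, DifferentiableAt ℝ (C k) s
  abs_deriv_spot_le : ∀ k > 0, ∀ s > 0, |deriv (C k) s| ≤ L

namespace IsCallPriceSurface

variable {C : ℝ → ℝ → ℝ} {L w ζ₀ : ℝ}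

theorem abs_sub_le (hC : IsCallPriceSurface C L) {k s s' : ℝ} (hk : 0 < k) (hs : 0 < s)
    (hs' : 0 < s') : |C k s - C k s'| ≤ L * |s - s'| := by
  simpa only [Real.norm_eq_abs] using (convex_Ioi 0).norm_image_sub_le_of_norm_deriv_le
    (fun x hx => hC.differentiableAt_spot k hk x hx)
    (fun x hx => by rw [Real.norm_eq_abs]; exact hC.abs_deriv_spot_le k hk x hx) hs' hs

theorem tendsto_apply_of_tendsto_atTop (hC : IsCallPriceSurface C L) {s₀ : ℝ} (hs₀ : 0 < s₀)
    {φ : ℝ → ℝ} {l : Filter ℝ} (hl : l ≤ 𝓝 s₀) (hφ : Tendsto φ l atTop) :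
    Tendsto (fun s => C (φ s) s) l (𝓝 0) := by
  have hbound : Tendsto (fun s => L * |s - s₀|) l (𝓝 0) := by
    have hcont : Continuous fun s : ℝ => L * |s - s₀| := by fun_prop
    simpa using (hcont.tendsto s₀).mono_left hl
  have hspot : Tendsto (fun s => C (φ s) s - C (φ s) s₀) l (𝓝 0) := by
    refine squeeze_zero_norm' ?_ hbound
    filter_upwards [hφ.eventually_gt_atTop 0, hl (lt_mem_nhds hs₀)] with s hk hs
    exact hC.abs_sub_le hk hs hs₀
  simpa using hspot.add ((hC.tendsto_atTop s₀ hs₀).comp hφ)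

theorem hasDerivAt_mul_apply_div (hC : IsCallPriceSurface C L) {z : ℝ → ℝ} {t z' : ℝ}
    (hw : 0 < w) (ht : 0 < t) (hz : HasDerivAt z z' t) (hzt : 0 < z t) :
    HasDerivAt (fun s => z s * C (w / z s) s)
      (z' * (C (w / z t) t - w / z t * deriv (C · t) (w / z t)) +
        z t * deriv (C (w / z t)) t) t := by
  have hk : 0 < w / z t := div_pos hw hzt
  refine hasDerivAt_mul_comp_div hz hzt.ne' ?_ ?_
    (hC.differentiableAt_strike _ hk t ht).hasDerivAt
    (hC.differentiableAt_spot _ hk t ht).hasDerivAt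
  · filter_upwards [lt_mem_nhds ht] with s hs using hC.convexOn s hs
  · filter_upwards [lt_mem_nhds hk] with k hk using
      (hC.differentiableAt_spot k hk t ht).continuousAt

theorem abs_deriv_mul_apply_div_le (hC : IsCallPriceSurface C L) {z : ℝ → ℝ} {t z' : ℝ}
    (hw : 0 < w) (ht : 0 < t) (hz : HasDerivAt z z' t) (hz' : 0 ≤ z') (hzt : 0 < z t) :
    |deriv (fun s => z s * C (w / z s) s) t| ≤ z' * (2 * C (w / z t / 2) t) + z t * L := by
  set k := w / z t
  have hk : 0 < k := div_pos hw hzt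
  have hstrike := (hC.differentiableAt_strike k hk t ht).hasDerivAt
  have htangent := (hC.convexOn t ht).sub_mul_le_two_mul_half_sub hstrike hk
  have hslope_nonpos := (hC.antitone t ht).deriv_nonpos (x := k)
  have hprice := hC.nonneg k t ht
  have hspot := hC.abs_deriv_spot_le k hk t ht
  rw [(hC.hasDerivAt_mul_apply_div hw ht hz hzt).deriv]
  calc _ ≤ |z' * (C k t - k * deriv (C · t) k)| + |z t * deriv (C k) t| := abs_add_le _ _
    _ ≤ z' * (2 * C (k / 2) t) + z t * L := by
      rw [abs_mul, abs_mul, abs_of_nonneg hz', abs_of_pos hzt,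
        abs_of_nonneg (by nlinarith)]
      gcongr
      linarith

theorem tendsto_mul_apply_div_nhdsGT (hC : IsCallPriceSurface C L) (hw : 0 < w) (hζ₀ : 0 < ζ₀) :
    Tendsto (fun s => (ζ₀ - w / s) * C (w / (ζ₀ - w / s)) s) (𝓝[>] (w / ζ₀)) (𝓝 0) := by
  have hz := tendsto_const_sub_div_nhdsGT hw hζ₀
  simpa using (hz.mono_right nhdsWithin_le_nhds).mul (hC.tendsto_apply_of_tendsto_atTop
    (div_pos hw hζ₀) nhdsWithin_le_nhds (tendsto_div_const_sub_div_nhdsGT hw hζ₀))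

theorem differentiableAt_mul_apply_div (hC : IsCallPriceSurface C L) (hw : 0 < w)
    (hζ₀ : 0 < ζ₀) {t : ℝ} (ht : w / ζ₀ < t) :
    DifferentiableAt ℝ (fun s => (ζ₀ - w / s) * C (w / (ζ₀ - w / s)) s) t :=
  have ht₀ : 0 < t := (div_pos hw hζ₀).trans ht
  (hC.hasDerivAt_mul_apply_div hw ht₀ (hasDerivAt_const_sub_div ζ₀ w ht₀.ne')
    (sub_div_pos_of_div_lt hw hζ₀ ht)).differentiableAt

theorem tendsto_deriv_mul_apply_div_nhdsGT (hC : IsCallPriceSurface C L) (hw : 0 < w)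
    (hζ₀ : 0 < ζ₀) :
    Tendsto (deriv fun s => (ζ₀ - w / s) * C (w / (ζ₀ - w / s)) s) (𝓝[>] (w / ζ₀)) (𝓝 0) := by
  have hs₀ : 0 < w / ζ₀ := div_pos hw hζ₀
  have hz := tendsto_const_sub_div_nhdsGT hw hζ₀
  have hK := (tendsto_div_const_sub_div_nhdsGT hw hζ₀).atTop_div_const two_pos
  have hslope : Tendsto (fun t : ℝ => w / t ^ 2) (𝓝[>] (w / ζ₀)) (𝓝 (w / (w / ζ₀) ^ 2)) :=
    ((continuousAt_const.div (continuousAt_id.pow 2) (pow_pos hs₀ 2).ne').tendsto).mono_left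
      nhdsWithin_le_nhds
  have hbound := (hslope.mul ((hC.tendsto_apply_of_tendsto_atTop hs₀ nhdsWithin_le_nhds
    hK).const_mul 2)).add ((hz.mono_right nhdsWithin_le_nhds).mul_const L)
  rw [mul_zero, mul_zero, zero_mul, add_zero] at hbound
  refine squeeze_zero_norm' ?_ hbound
  filter_upwards [self_mem_nhdsWithin] with t ht
  have ht₀ : 0 < t := hs₀.trans ht
  exact hC.abs_deriv_mul_apply_div_le hw ht₀ (hasDerivAt_const_sub_div ζ₀ w ht₀.ne')
    (by positivity) (sub_div_pos_of_div_lt hw hζ₀ ht)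

end IsCallPriceSurface

theorem isCallPriceSurface_of_put {κ : ℝ → Measure ℝ} {P : ℝ → ℝ → ℝ} {M : ℝ}
    (hκ : ∀ s > 0, IsProbabilityMeasure (κ s))
    (hint : ∀ s > 0, Integrable (fun y => y) (κ s))
    (hmean : ∀ s > 0, ∫ y, y ∂(κ s) = s)
    (hP : ∀ K s, 0 < s → P K s = ∫ y, max (K - y) 0 ∂(κ s))
    (hdiffS : ∀ K s, 0 < K → 0 < s → DifferentiableAt ℝ (fun x => P K x) s)
    (hdiffK : ∀ K s, 0 < K → 0 < s → DifferentiableAt ℝ (fun k => P k s) K)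
    (hM : ∀ K s, 0 < K → 0 < s → |deriv (fun x => P K x) s| ≤ M) :
    IsCallPriceSurface (fun k s => P k s - k + s) (M + 1) := by
  have hcall : ∀ k, ∀ s > 0, P k s - k + s = callPrice (κ s) k := fun k s hs => by
    have := hκ s hs
    rw [hP k s hs, integral_put_eq (hint s hs), hmean s hs]
    ring
  have hspot : ∀ k s, 0 < k → 0 < s →
      HasDerivAt (fun x => P k x - k + x) (deriv (fun x => P k x) s + 1) s := fun k s hk hs =>
    ((hdiffS k s hk hs).hasDerivAt.sub_const k).add (hasDerivAt_id s)
  refine ⟨fun s hs => ?_, fun s hs => ?_, fun k s hs => ?_, fun s hs => ?_,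
    fun k hk s hs => ((hdiffK k s hk hs).sub differentiableAt_id).add_const s,
    fun k hk s hs => (hspot k s hk hs).differentiableAt, fun k hk s hs => ?_⟩
  · have := hκ s hs
    simpa only [hcall _ s hs] using convexOn_callPrice (hint s hs)
  · have := hκ s hs
    simpa only [hcall _ s hs] using antitone_callPrice (hint s hs)
  · simpa only [hcall k s hs] using callPrice_nonneg k
  · have := hκ s hs
    simpa only [hcall _ s hs] using tendsto_callPrice_atTop (hint s hs)
  · rw [(hspot k s hk hs).deriv]
    linarith [abs_add_le (deriv (fun x => P k x) s) 1, hM k s hk hs, abs_one (α := ℝ)]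

theorem two_period_V1_continuity_general
    (w ζ0 : ℝ) (hw : 0 < w) (hζ0 : 0 < ζ0)
    (κ : ℝ → Measure ℝ)            -- conditional law of `S₂` given `S₁ = s`
    (hκprob : ∀ s > 0, IsProbabilityMeasure (κ s))
    (hint : ∀ s > 0, Integrable (fun y => y) (κ s))
    (hmart : ∀ s > 0, ∫ y, y ∂(κ s) = s)
    (P1 : ℝ → ℝ → ℝ)
    (hP1 : ∀ K s, 0 < s → P1 K s = ∫ y, max (K - y) 0 ∂(κ s))
    (hdiffS : ∀ K s, 0 < K → 0 < s → DifferentiableAt ℝ (fun x => P1 K x) s)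
    (hdiffK : ∀ K s, 0 < K → 0 < s → DifferentiableAt ℝ (fun k => P1 k s) K)
    (hΔbdd : ∃ M, ∀ K s, 0 < K → 0 < s → |deriv (fun x => P1 K x) s| ≤ M)
    (V1 : ℝ → ℝ)
    (hV1 : ∀ S1, V1 S1 =
      if S1 ≤ w / ζ0 then 2 * w - ζ0 * S1
      else (ζ0 - w / S1) * P1 (w / (ζ0 - w / S1)) S1) :
    (Tendsto V1 (nhdsWithin (w / ζ0) (Set.Iio (w / ζ0))) (nhds w)) ∧
    (Tendsto V1 (nhdsWithin (w / ζ0) (Set.Ioi (w / ζ0))) (nhds w)) ∧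
    ContinuousAt V1 (w / ζ0) ∧
    (Tendsto (deriv V1) (nhdsWithin (w / ζ0) (Set.Iio (w / ζ0))) (nhds (-ζ0))) ∧
    (Tendsto (deriv V1) (nhdsWithin (w / ζ0) (Set.Ioi (w / ζ0))) (nhds (-ζ0))) := by
  obtain ⟨M, hM⟩ := hΔbdd
  have hC := isCallPriceSurface_of_put hκprob hint hmart hP1 hdiffS hdiffK hM
  have hV1_right : ∀ s > w / ζ0, V1 s = (2 * w - ζ0 * s) +
      (ζ0 - w / s) * (P1 (w / (ζ0 - w / s)) s - w / (ζ0 - w / s) + s) := fun s hs => by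
    have hz := (sub_div_pos_of_div_lt hw hζ0 hs).ne'
    have hzK : (ζ0 - w / s) * (w / (ζ0 - w / s)) = w := mul_div_cancel₀ w hz
    have hzs : (ζ0 - w / s) * s = ζ0 * s - w := by
      field_simp [((div_pos hw hζ0).trans hs).ne']
    rw [hV1, if_neg (not_le.2 hs)]
    linear_combination hzK - hzs
  have hlinear : ∀ x, HasDerivAt (fun s => 2 * w - ζ0 * s) (-ζ0) x := fun x => by
    simpa using ((hasDerivAt_id x).const_mul ζ0).const_sub (2 * w)
  have key := one_sided_limits_of_eq_add hlinear continuousAt_const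
    (fun s hs => by rw [hV1, if_pos hs]) hV1_right (hC.tendsto_mul_apply_div_nhdsGT hw hζ0)
    (fun t ht => hC.differentiableAt_mul_apply_div hw hζ0 ht)
    (hC.tendsto_deriv_mul_apply_div_nhdsGT hw hζ0)
  rwa [show 2 * w - ζ0 * (w / ζ0) = w by field_simp; ring] at key

/-- In the two-period case, the hedging cost function
`V₁(S₁) = 2w - ζ₀ S₁` for `0 ≤ S₁ ≤ w/ζ₀` and
`V₁(S₁) = (ζ₀ - w/S₁) · P₁(w/(ζ₀ - w/S₁) | S₁)` for `S₁ > w/ζ₀`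
is continuous at `S₁ = w/ζ₀` with both one-sided limits equal to `w`, and its
derivative has both one-sided limits at `w/ζ₀` equal to `-ζ₀`. -/
theorem two_period_V1_continuity
    (w ζ0 : ℝ) (hw : 0 < w) (hζ0 : 0 < ζ0)
    (κ : ℝ → Measure ℝ)            -- conditional law of `S₂` given `S₁ = s`
    (hκprob : ∀ s > 0, IsProbabilityMeasure (κ s))
    (hκpos : ∀ s > 0, (κ s) (Set.Iic 0) = 0)
    (hint : ∀ s > 0, Integrable (fun y => y) (κ s))
    (hmart : ∀ s > 0, ∫ y, y ∂(κ s) = s)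
    (P1 : ℝ → ℝ → ℝ)
    (hP1 : ∀ K s, 0 < s → P1 K s = ∫ y, max (K - y) 0 ∂(κ s))
    (hdiffS : ∀ K s, 0 < K → 0 < s → DifferentiableAt ℝ (fun x => P1 K x) s)
    (hdiffK : ∀ K s, 0 < K → 0 < s → DifferentiableAt ℝ (fun k => P1 k s) K)
    (hΔbdd : ∃ M, ∀ K s, 0 < K → 0 < s → |deriv (fun x => P1 K x) s| ≤ M)
    (V1 : ℝ → ℝ)
    (hV1 : ∀ S1, V1 S1 =
      if S1 ≤ w / ζ0 then 2 * w - ζ0 * S1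
      else (ζ0 - w / S1) * P1 (w / (ζ0 - w / S1)) S1) :
    (Tendsto V1 (nhdsWithin (w / ζ0) (Set.Iio (w / ζ0))) (nhds w)) ∧
    (Tendsto V1 (nhdsWithin (w / ζ0) (Set.Ioi (w / ζ0))) (nhds w)) ∧
    ContinuousAt V1 (w / ζ0) ∧
    (Tendsto (deriv V1) (nhdsWithin (w / ζ0) (Set.Iio (w / ζ0))) (nhds (-ζ0))) ∧
    (Tendsto (deriv V1) (nhdsWithin (w / ζ0) (Set.Ioi (w / ζ0))) (nhds (-ζ0))) :=
  two_period_V1_continuity_general w ζ0 hw hζ0 κ hκprob hint hmart P1 hP1 hdiffS hdiffK hΔbdd V1 hV1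
end
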